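/- Analytic form of the deterministic nested dropout loss: let X ∈ ℝ^{m×n}, W1 ∈ ℝ^{k×m}, W2 ∈ ℝ^{m×k}, and let p : {1,…,k} → [0,1] satisfy Σ_{b=1}^k p(b) = 1. For b ∈ {1,…,k} let π_b : ℝ^{k×n} → ℝ^{k×n} set to zero all rows with index greater than b. Define cumulative keep probabilities p_i = Σ_{b=i}^k p(b), the diagonal matrix P_D = diag(p_1,…,p_k), and P_L ∈ ℝ^{k×k} with (P_L)_{ij} = p_{max(i,j)}. Then Σ_{b=1}^k p(b) · (1/(2n))‖X − W2 π_b(W1 X)‖_F² = (1/(2n)) Tr(XᵀX) − (1/n) Tr(Xᵀ W2 P_D W1 X) + (1/(2n)) Tr(Xᵀ W1ᵀ ((W2ᵀW2) ∘ P_L) W1 X), where ∘ denotes the entrywise (Hadamard) product. -/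

import Mathlib

/-!
Write `π_b(Y) = E_b Y` with `E_b` the diagonal 0/1 mask of the coordinates `i ≤ b`. Expanding
`‖X - W₂ E_b Y‖² = Tr XᵀX - 2 Tr XᵀW₂E_bY + Tr Yᵀ E_b W₂ᵀW₂ E_b Y`, the loss is linear in `E_b` and
in `E_b A E_b`, so averaging over `b` only needs `Σ_b p(b) E_b = P_D` and
`Σ_b p(b) E_b A E_b = A ∘ P_L`, the latter because `(E_b A E_b)ᵢⱼ = Aᵢⱼ [max i j ≤ b]`.
-/

open Matrix BigOperators

noncomputable def frobSq {a b : ℕ} (M : Matrix (Fin a) (Fin b) ℝ) : ℝ :=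
  ∑ i, ∑ j, (M i j) ^ 2

theorem frobSq_eq_trace {a b : ℕ} (M : Matrix (Fin a) (Fin b) ℝ) :
    frobSq M = trace (Mᵀ * M) := by
  simp only [frobSq, trace, diag_apply, mul_apply, transpose_apply, sq]
  exact Finset.sum_comm

namespace Matrix

variable {ι l m n R : Type*}

theorem trace_transpose_mul_self_sub [Fintype m] [Fintype n] [CommRing R] (X A : Matrix m n R) :
    trace ((X - A)ᵀ * (X - A)) = trace (Xᵀ * X) - 2 * trace (Xᵀ * A) + trace (Aᵀ * A) := by
  have hsymm : trace (Aᵀ * X) = trace (Xᵀ * A) := by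
    rw [← trace_transpose, transpose_mul, transpose_transpose]
  rw [transpose_sub, Matrix.sub_mul, Matrix.mul_sub, Matrix.mul_sub, trace_sub, trace_sub,
    trace_sub, hsymm]
  ring

theorem sum_mul_trace_mul_mul [Fintype l] [Fintype m] [Fintype n] [CommSemiring R]
    (s : Finset ι) (p : ι → R) (A : Matrix n l R) (M : ι → Matrix l m R) (B : Matrix m n R) :
    ∑ b ∈ s, p b * trace (A * M b * B) = trace (A * (∑ b ∈ s, p b • M b) * B) := by
  simp only [Matrix.mul_sum, Matrix.sum_mul, trace_sum, Matrix.mul_smul, Matrix.smul_mul,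
    trace_smul, smul_eq_mul]

theorem sum_mul_trace_transpose_mul_self_sub [Fintype ι] [Fintype l] [Fintype m] [Fintype n]
    [CommRing R] (p : ι → R) (X : Matrix m n R) (W : Matrix m l R) (M : ι → Matrix l l R)
    (Y : Matrix l n R) :
    ∑ b, p b * trace ((X - W * (M b * Y))ᵀ * (X - W * (M b * Y)))
      = (∑ b, p b) * trace (Xᵀ * X) - 2 * trace (Xᵀ * W * (∑ b, p b • M b) * Y)
        + trace (Yᵀ * (∑ b, p b • ((M b)ᵀ * (Wᵀ * W) * M b)) * Y) := by
  have hquad : ∀ b, (W * (M b * Y))ᵀ * (W * (M b * Y))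
      = Yᵀ * ((M b)ᵀ * (Wᵀ * W) * M b) * Y := by
    intro b
    simp only [transpose_mul, Matrix.mul_assoc]
  simp only [trace_transpose_mul_self_sub, hquad, mul_add, mul_sub, Finset.sum_add_distrib,
    Finset.sum_sub_distrib, ← Finset.sum_mul, mul_left_comm _ (2 : R), ← Finset.mul_sum,
    ← sum_mul_trace_mul_mul]
  simp only [Matrix.mul_assoc]

section PrefixMask

variable [LinearOrder ι]

def prefixMask [Zero R] [One R] (b : ι) : Matrix ι ι R :=
  diagonal fun i => if i ≤ b then 1 else 0

theorem prefixMask_mul [Fintype ι] [Semiring R] (b : ι) (Y : Matrix ι n R) :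
    (prefixMask b : Matrix ι ι R) * Y = of fun i j => if i ≤ b then Y i j else 0 := by
  ext i j
  simp only [prefixMask, diagonal_mul, of_apply, ite_mul, one_mul, zero_mul]

theorem transpose_prefixMask [Zero R] [One R] (b : ι) :
    (prefixMask b : Matrix ι ι R)ᵀ = prefixMask b :=
  diagonal_transpose _

theorem sum_smul_prefixMask [Fintype ι] [CommSemiring R] (p : ι → R) :
    ∑ b, p b • (prefixMask b : Matrix ι ι R)
      = diagonal fun i => ∑ b ∈ Finset.univ.filter (fun b => i ≤ b), p b := by
  ext i j
  by_cases h : i = j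
  · subst h
    simp [prefixMask, Matrix.sum_apply, Finset.sum_filter]
  · simp [prefixMask, Matrix.sum_apply, h]

theorem sum_smul_prefixMask_mul_mul_prefixMask [Fintype ι] [CommSemiring R] (p : ι → R)
    (A : Matrix ι ι R) :
    ∑ b, p b • (prefixMask b * A * prefixMask b)
      = A ⊙ of fun i j => ∑ b ∈ Finset.univ.filter (fun b => max i j ≤ b), p b := by
  ext i j
  simp only [prefixMask, mul_diagonal, diagonal_mul, Matrix.sum_apply, smul_apply, smul_eq_mul,
    hadamard_apply, of_apply, Finset.sum_filter, Finset.mul_sum, max_le_iff]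
  refine Finset.sum_congr rfl fun b _ => ?_
  by_cases hi : i ≤ b <;> by_cases hj : j ≤ b <;> simp [hi, hj, mul_comm]

end PrefixMask

end Matrix

theorem deterministic_nested_dropout_loss_general (m k n : ℕ)
    (X : Matrix (Fin m) (Fin n) ℝ)
    (W1 : Matrix (Fin k) (Fin m) ℝ) (W2 : Matrix (Fin m) (Fin k) ℝ)
    (p : Fin k → ℝ)
    (hpsum : ∑ b, p b = 1) :
    ∑ b : Fin k, p b * ((1 / (2 * (n : ℝ)))
        * frobSq (X - W2 * Matrix.of fun (i : Fin k) (j : Fin n) =>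
            if i ≤ b then (W1 * X) i j else 0))
    = (1 / (2 * (n : ℝ))) * Matrix.trace (Xᵀ * X)
      - (1 / (n : ℝ)) * Matrix.trace (Xᵀ * W2
          * Matrix.diagonal (fun i : Fin k =>
              ∑ b ∈ Finset.univ.filter (fun b : Fin k => i ≤ b), p b)
          * W1 * X)
      + (1 / (2 * (n : ℝ))) * Matrix.trace (Xᵀ * W1ᵀ
          * Matrix.hadamard (W2ᵀ * W2)
              (Matrix.of fun i j : Fin k =>
                ∑ b ∈ Finset.univ.filter (fun b : Fin k => max i j ≤ b), p b)
          * W1 * X) := by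
  have hloss := sum_mul_trace_transpose_mul_self_sub p X W2 prefixMask (W1 * X)
  simp only [transpose_prefixMask, sum_smul_prefixMask, sum_smul_prefixMask_mul_mul_prefixMask,
    hpsum, one_mul] at hloss
  simp only [← prefixMask_mul, frobSq_eq_trace, mul_left_comm (p _), ← Finset.mul_sum]
  simp only [transpose_mul, Matrix.mul_assoc] at hloss ⊢
  rw [hloss]
  ring

/-- Analytic form of the deterministic nested dropout loss:
`Σ_b p(b)·(1/(2n))‖X − W2 π_b(W1X)‖_F²
  = (1/(2n))Tr(XᵀX) − (1/n)Tr(XᵀW2 P_D W1 X) + (1/(2n))Tr(XᵀW1ᵀ((W2ᵀW2)∘P_L)W1X)`,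
where `π_b` zeroes the rows with index greater than `b`, `p_i = Σ_{b≥i} p(b)`,
`P_D = diag(p_1,…,p_k)` and `(P_L)_{ij} = p_{max(i,j)}`. -/
theorem deterministic_nested_dropout_loss (m k n : ℕ) (hm : 1 ≤ m) (hk : 1 ≤ k) (hn : 1 ≤ n)
    (X : Matrix (Fin m) (Fin n) ℝ)
    (W1 : Matrix (Fin k) (Fin m) ℝ) (W2 : Matrix (Fin m) (Fin k) ℝ)
    (p : Fin k → ℝ) (hp0 : ∀ b, 0 ≤ p b) (hp1 : ∀ b, p b ≤ 1)
    (hpsum : ∑ b, p b = 1) :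
    ∑ b : Fin k, p b * ((1 / (2 * (n : ℝ)))
        * frobSq (X - W2 * Matrix.of fun (i : Fin k) (j : Fin n) =>
            if i ≤ b then (W1 * X) i j else 0))
    = (1 / (2 * (n : ℝ))) * Matrix.trace (Xᵀ * X)
      - (1 / (n : ℝ)) * Matrix.trace (Xᵀ * W2
          * Matrix.diagonal (fun i : Fin k =>
              ∑ b ∈ Finset.univ.filter (fun b : Fin k => i ≤ b), p b)
          * W1 * X)
      + (1 / (2 * (n : ℝ))) * Matrix.trace (Xᵀ * W1ᵀ
          * Matrix.hadamard (W2ᵀ * W2)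
              (Matrix.of fun i j : Fin k =>
                ∑ b ∈ Finset.univ.filter (fun b : Fin k => max i j ≤ b), p b)
          * W1 * X) :=
  deterministic_nested_dropout_loss_general m k n X W1 W2 p hpsum
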